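/- Let X be an n-by-d real matrix with X^T X invertible, Y in R^n, let x_1 in R^d be nonzero, and let y_1 in R. For lambda > 0 define theta_full(lambda) = (X^T X + lambda^2 x_1 x_1^T)^{-1} (X^T Y + lambda^2 y_1 x_1) and the influence-method update theta_inf(lambda) = theta_full(lambda) + lambda^2 (<theta_full(lambda), x_1> - y_1) (X^T X + lambda^2 x_1 x_1^T)^{-1} x_1. Then as lambda tends to infinity, theta_inf(lambda) - theta_full(lambda) converges to the zero vector; that is, in the large-outlier limit the influence method does not update the parameters at all. -/

import Mathlib

open Matrix Filter

/-! Write `A = XᵀX`, `B = A + λ² x₁x₁ᵀ` and `c = x₁ᵀA⁻¹x₁`, which is positive because `A` is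
positive definite. Sherman–Morrison gives `B⁻¹x₁ = A⁻¹x₁ / (1 + λ²c)`, and with it the residual
`⟨θ_full, x₁⟩ - y₁` of the outlier also shrinks like `1 / (1 + λ²c)`. Hence the influence update is
`λ² / (1 + λ²c)²` times a vector independent of `λ`, so it is `O(λ⁻²)`. -/

namespace Matrix

theorem IsSymm.mulVec_dotProduct {ι R : Type*} [Fintype ι] [CommSemiring R] {M : Matrix ι ι R}
    (hM : M.IsSymm) (v w : ι → R) :
    M *ᵥ v ⬝ᵥ w = v ⬝ᵥ M *ᵥ w := by
  rw [dotProduct_mulVec, ← mulVec_transpose, hM.eq]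

section ShermanMorrison

variable {ι K : Type*} [Fintype ι] [DecidableEq ι] [Field K] {A : Matrix ι ι K}

theorem det_add_vecMulVec (hA : IsUnit A.det) (u v : ι → K) :
    (A + vecMulVec u v).det = A.det * (1 + v ⬝ᵥ A⁻¹ *ᵥ u) := by
  rw [vecMulVec_eq Unit, det_add_mul _ _ hA, det_unique (1 + _ : Matrix Unit Unit K),
    Matrix.mul_assoc, ← replicateCol_mulVec, add_apply, one_apply_eq,
    replicateRow_mul_replicateCol_apply]

theorem inv_add_vecMulVec_mulVec (hA : IsUnit A.det) {u v : ι → K}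
    (h : 1 + v ⬝ᵥ A⁻¹ *ᵥ u ≠ 0) :
    (A + vecMulVec u v)⁻¹ *ᵥ u = (1 + v ⬝ᵥ A⁻¹ *ᵥ u)⁻¹ • A⁻¹ *ᵥ u := by
  have hB : IsUnit (A + vecMulVec u v).det := by
    rw [det_add_vecMulVec hA]; exact hA.mul h.isUnit
  have hBw : (A + vecMulVec u v) *ᵥ (A⁻¹ *ᵥ u) = (1 + v ⬝ᵥ A⁻¹ *ᵥ u) • u := by
    rw [add_mulVec, mulVec_mulVec, mul_nonsing_inv A hA, one_mulVec, vecMulVec_mulVec,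
      op_smul_eq_smul, add_smul, one_smul]
  rw [eq_inv_smul_iff₀ h, ← mulVec_smul, ← hBw, mulVec_mulVec, nonsing_inv_mul _ hB, one_mulVec]

-- With `s = λ²`, `b = XᵀY`, the left side is `θ_inf(λ) - θ_full(λ)` for `A = XᵀX`.
theorem influence_update_eq (hAs : A.IsSymm) (hA : IsUnit A.det) (b x : ι → K) (y s : K)
    (h : 1 + s * (x ⬝ᵥ A⁻¹ *ᵥ x) ≠ 0) :
    (s * ((A + s • vecMulVec x x)⁻¹ *ᵥ (b + (s * y) • x) ⬝ᵥ x - y)) •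
        (A + s • vecMulVec x x)⁻¹ *ᵥ x =
      (s * (1 + s * (x ⬝ᵥ A⁻¹ *ᵥ x))⁻¹ ^ 2 * (A⁻¹ *ᵥ x ⬝ᵥ b - y)) • A⁻¹ *ᵥ x := by
  set B := A + s • vecMulVec x x
  have hBs : B⁻¹.IsSymm := (hAs.add (IsSymm.smul (transpose_vecMulVec x x) s)).inv
  have hBx : B⁻¹ *ᵥ x = (1 + s * (x ⬝ᵥ A⁻¹ *ᵥ x))⁻¹ • A⁻¹ *ᵥ x := by
    have := inv_add_vecMulVec_mulVec hA (v := s • x) (by rwa [smul_dotProduct, smul_eq_mul])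
    rwa [vecMulVec_smul, smul_dotProduct, smul_eq_mul] at this
  rw [hBs.mulVec_dotProduct, hBx, smul_smul, dotProduct_smul, add_dotProduct, smul_dotProduct,
    dotProduct_comm b, smul_eq_mul, smul_eq_mul]
  congr 1
  field_simp
  ring

end ShermanMorrison

theorem posDef_transpose_mul_self_of_isUnit {m n : Type*} [Fintype m] [Fintype n]
    [DecidableEq n] (X : Matrix m n ℝ) (hX : IsUnit (Xᵀ * X)) : (Xᵀ * X).PosDef := by
  have hinj : Function.Injective X.mulVec := by
    refine .of_comp (f := Xᵀ.mulVec) ?_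
    simpa only [Function.comp_def, mulVec_mulVec] using mulVec_injective_iff_isUnit.mpr hX
  simpa only [conjTranspose_eq_transpose_of_trivial] using PosDef.conjTranspose_mul_self X hinj

end Matrix

theorem tendsto_mul_inv_one_add_mul_sq_atTop {c : ℝ} (hc : 0 < c) :
    Tendsto (fun s : ℝ => s * (1 + s * c)⁻¹ ^ 2) atTop (nhds 0) := by
  have hdom : Tendsto (fun s : ℝ => (c ^ 2 * s)⁻¹) atTop (nhds 0) :=
    tendsto_inv_atTop_zero.comp (tendsto_id.const_mul_atTop (by positivity))
  refine squeeze_zero' ?_ ?_ hdom <;> filter_upwards [eventually_gt_atTop 0] with s hs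
  · positivity
  · calc s * (1 + s * c)⁻¹ ^ 2 = s / (1 + s * c) ^ 2 := by rw [inv_pow, div_eq_mul_inv]
      _ ≤ s / (s * c) ^ 2 := by gcongr; linarith [mul_pos hs hc]
      _ = (c ^ 2 * s)⁻¹ := by field_simp

/-- In the large-outlier limit, the influence-method update does not move the
parameters at all: `θ_inf(λ) - θ_full(λ) → 0` as `λ → ∞`. -/
theorem stmt_16 {n d : ℕ} (X : Matrix (Fin n) (Fin d) ℝ) (hX : IsUnit (Xᵀ * X))
    (Y : Fin n → ℝ) (x₁ : Fin d → ℝ) (hx₁ : x₁ ≠ 0) (y₁ : ℝ) :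
    let θfull : ℝ → (Fin d → ℝ) := fun lam =>
      (Xᵀ * X + lam ^ 2 • vecMulVec x₁ x₁)⁻¹.mulVec
        (Xᵀ.mulVec Y + (lam ^ 2 * y₁) • x₁)
    let θinf : ℝ → (Fin d → ℝ) := fun lam =>
      θfull lam + (lam ^ 2 * (θfull lam ⬝ᵥ x₁ - y₁)) •
        (Xᵀ * X + lam ^ 2 • vecMulVec x₁ x₁)⁻¹.mulVec x₁
    Tendsto (fun lam : ℝ => θinf lam - θfull lam) atTop (nhds 0) := by
  intro θfull θinf
  simp only [θinf, θfull, add_sub_cancel_left]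
  have hc : 0 < x₁ ⬝ᵥ (Xᵀ * X)⁻¹ *ᵥ x₁ := by
    simpa only [star_trivial] using
      (posDef_transpose_mul_self_of_isUnit X hX).inv.dotProduct_mulVec_pos hx₁
  have hsymm : (Xᵀ * X).IsSymm := by rw [IsSymm, transpose_mul, transpose_transpose]
  have hupdate : ∀ lam : ℝ, _ = _ := fun lam =>
    influence_update_eq hsymm ((isUnit_iff_isUnit_det _).mp hX)
      (Xᵀ *ᵥ Y) x₁ y₁ (lam ^ 2) (by positivity)
  simp only [hupdate]
  have hscale := (tendsto_mul_inv_one_add_mul_sq_atTop hc).comp (tendsto_pow_atTop two_ne_zero)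
  simpa only [Function.comp_def, zero_mul, zero_smul] using
    (hscale.mul_const _).smul_const ((Xᵀ * X)⁻¹ *ᵥ x₁)
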